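/- arXiv:2306.06927 — 6 statements merged into one kernel-verified Lean document; each statement's English description precedes it below -/
import Mathlib

section
/- Let (Ω, 𝓕, P) be a probability space, let (R_n)_{n≥1} be nonnegative random variables, and let M be an a.s. finite ℕ-valued random variable. Suppose for some p ≥ 1 there exist constants C' > 0 and ε > 0 such that E[R_n^{2p}] ≤ C' for all n ≥ 1 and E[M^{2p+ε}] < ∞. Then E[(∑_{n=1}^{M} R_n)^p] < ∞. -/
open MeasureTheory
open scoped ENNReal

/-- If `(R n)` are nonnegative random variables with `E[R n ^ (2p)] ≤ C'`
for all `n ≥ 1`, and `M` is an a.s. finite `ℕ`-valued random variable with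
`E[M ^ (2p + ε)] < ∞` for some `ε > 0`, then `E[(∑_{n=1}^M R n) ^ p] < ∞`. -/
theorem stmt_1 {Ω : Type*} {m0 : MeasurableSpace Ω} {μ : Measure Ω} [IsProbabilityMeasure μ]
    (R : ℕ → Ω → ℝ) (M : Ω → ℕ) (p C' ε : ℝ)
    (hp : 1 ≤ p) (hC' : 0 < C') (hε : 0 < ε)
    (hR_meas : ∀ n, Measurable (R n))
    (hR_nonneg : ∀ n, 1 ≤ n → ∀ ω, 0 ≤ R n ω)
    (hM_meas : Measurable M)
    (hR_mom : ∀ n, 1 ≤ n → ∫⁻ ω, ENNReal.ofReal ((R n ω) ^ (2 * p)) ∂μ ≤ ENNReal.ofReal C')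
    (hM_mom : ∫⁻ ω, (M ω : ℝ≥0∞) ^ (2 * p + ε) ∂μ < ⊤) :
    ∫⁻ ω, ENNReal.ofReal ((∑ n ∈ Finset.Icc 1 (M ω), R n ω) ^ p) ∂μ < ⊤ := by
  set q : ℝ := 1 + ε / 2 with hq
  have hq1 : 1 < q := by simp [hq]; linarith
  -- constants
  set c : ℕ → ℝ≥0∞ := fun n => ENNReal.ofReal ((1 / 2) * (n : ℝ) ^ (-q)) with hc
  -- the dominating functions
  set A : Ω → ℝ≥0∞ := fun ω => ENNReal.ofReal (((M ω : ℝ)) ^ (2 * p + ε)) with hA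
  set B : ℕ → Ω → ℝ≥0∞ := fun n ω => ENNReal.ofReal ((R n ω) ^ (2 * p)) with hB
  have h2pε : (0:ℝ) ≤ 2 * p + ε := by linarith
  have h2p : (0:ℝ) ≤ 2 * p := by linarith
  -- A equals the ENNReal power of M
  have hA_eq : ∀ ω, A ω = (M ω : ℝ≥0∞) ^ (2 * p + ε) := by
    intro ω
    show ENNReal.ofReal (((M ω : ℕ) : ℝ) ^ (2 * p + ε)) = _
    rw [← ENNReal.ofReal_rpow_of_nonneg (x := ((M ω : ℕ) : ℝ)) (Nat.cast_nonneg _) h2pε,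
      ENNReal.ofReal_natCast]
  have hA_int : ∫⁻ ω, A ω ∂μ < ⊤ := by
    calc ∫⁻ ω, A ω ∂μ = ∫⁻ ω, (M ω : ℝ≥0∞) ^ (2 * p + ε) ∂μ := by
          exact lintegral_congr hA_eq
      _ < ⊤ := hM_mom
  -- measurability
  have hA_meas : Measurable A := by
    apply Measurable.ennreal_ofReal
    exact (Real.continuous_rpow_const h2pε).measurable.comp
      (measurable_from_top.comp hM_meas : Measurable fun ω => ((M ω : ℕ) : ℝ))
  have hB_meas : ∀ n, Measurable (B n) := by
    intro n
    apply Measurable.ennreal_ofReal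
    exact (Real.continuous_rpow_const h2p).measurable.comp (hR_meas n)
  -- pointwise bound
  have key : ∀ ω, ENNReal.ofReal ((∑ n ∈ Finset.Icc 1 (M ω), R n ω) ^ p)
      ≤ ∑' n, c n * (A ω + B n ω) := by
    intro ω
    set m := M ω with hm
    -- real inequality, termwise
    have hterm : ∀ n ∈ Finset.Icc 1 m,
        (m : ℝ) ^ (p - 1) * (R n ω) ^ p
          ≤ (1 / 2) * (n : ℝ) ^ (-q) * (((m : ℝ)) ^ (2 * p + ε) + (R n ω) ^ (2 * p)) := by
      intro n hn
      rw [Finset.mem_Icc] at hn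
      have hN1 : (1:ℝ) ≤ (n:ℝ) := by exact_mod_cast hn.1
      have hNM : (n:ℝ) ≤ (m:ℝ) := by exact_mod_cast hn.2
      have hN0 : (0:ℝ) < (n:ℝ) := by linarith
      have hM1 : (1:ℝ) ≤ (m:ℝ) := le_trans hN1 hNM
      have hM0 : (0:ℝ) < (m:ℝ) := by linarith
      have hr : (0:ℝ) ≤ R n ω := hR_nonneg n hn.1 ω
      set N := (n:ℝ)
      set Mr := (m:ℝ)
      set r := R n ω
      set a := N ^ (q / 2) * Mr ^ (p - 1) with ha
      set b := N ^ (-(q / 2)) * r ^ p with hb'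
      have hab : a * b = Mr ^ (p - 1) * r ^ p := by
        rw [ha, hb']
        have : N ^ (q / 2) * N ^ (-(q / 2)) = 1 := by
          rw [← Real.rpow_add hN0]; simp
        calc N ^ (q / 2) * Mr ^ (p - 1) * (N ^ (-(q / 2)) * r ^ p)
            = (N ^ (q / 2) * N ^ (-(q / 2))) * (Mr ^ (p - 1) * r ^ p) := by ring
          _ = Mr ^ (p - 1) * r ^ p := by rw [this, one_mul]
      have ha2 : a ^ 2 = N ^ q * Mr ^ (2 * p - 2) := by
        have h1 : N ^ (q / 2) * N ^ (q / 2) = N ^ q := by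
          rw [← Real.rpow_add hN0]; congr 1; ring
        have h2 : Mr ^ (p - 1) * Mr ^ (p - 1) = Mr ^ (2 * p - 2) := by
          rw [← Real.rpow_add hM0]; congr 1; ring
        calc a ^ 2 = (N ^ (q / 2) * N ^ (q / 2)) * (Mr ^ (p - 1) * Mr ^ (p - 1)) := by
              rw [ha]; ring
          _ = N ^ q * Mr ^ (2 * p - 2) := by rw [h1, h2]
      have hb2 : b ^ 2 = N ^ (-q) * r ^ (2 * p) := by
        have h1 : N ^ (-(q / 2)) * N ^ (-(q / 2)) = N ^ (-q) := by
          rw [← Real.rpow_add hN0]; congr 1; ring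
        have h2 : r ^ p * r ^ p = r ^ (2 * p) := by
          have h3 : r ^ (p + p) = r ^ p * r ^ p := Real.rpow_add' hr (by linarith)
          rw [← h3]; congr 1; ring
        calc b ^ 2 = (N ^ (-(q / 2)) * N ^ (-(q / 2))) * (r ^ p * r ^ p) := by
              rw [hb']; ring
          _ = N ^ (-q) * r ^ (2 * p) := by rw [h1, h2]
      have ha2' : a ^ 2 ≤ N ^ (-q) * Mr ^ (2 * p + ε) := by
        rw [ha2]
        have h1 : N ^ q = N ^ (-q) * N ^ (2 * q) := by
          rw [← Real.rpow_add hN0]; ring_nf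
        have h2 : N ^ (2 * q) ≤ Mr ^ (2 * q) := by
          apply Real.rpow_le_rpow hN0.le hNM; linarith
        have h3 : Mr ^ (2 * q) * Mr ^ (2 * p - 2) = Mr ^ (2 * p + ε) := by
          rw [← Real.rpow_add hM0, hq]; ring_nf
        calc N ^ q * Mr ^ (2 * p - 2) = N ^ (-q) * (N ^ (2*q) * Mr ^ (2*p-2)) := by
              rw [h1]; ring
          _ ≤ N ^ (-q) * (Mr ^ (2*q) * Mr ^ (2*p-2)) := by
              apply mul_le_mul_of_nonneg_left _ (Real.rpow_nonneg hN0.le _)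
              apply mul_le_mul_of_nonneg_right h2 (Real.rpow_nonneg hM0.le _)
          _ = N ^ (-q) * Mr ^ (2 * p + ε) := by rw [h3]
      have hyoung : 2 * (a * b) ≤ a ^ 2 + b ^ 2 := by
        have := two_mul_le_add_sq a b; nlinarith [this]
      calc Mr ^ (p - 1) * r ^ p = a * b := hab.symm
        _ ≤ (a ^ 2 + b ^ 2) / 2 := by linarith
        _ ≤ (N ^ (-q) * Mr ^ (2 * p + ε) + N ^ (-q) * r ^ (2 * p)) / 2 := by
            rw [hb2]; linarith [ha2']
        _ = (1 / 2) * N ^ (-q) * (Mr ^ (2 * p + ε) + r ^ (2 * p)) := by ring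
    -- sum the real bounds
    have hS : (∑ n ∈ Finset.Icc 1 m, R n ω) ^ p
        ≤ ∑ n ∈ Finset.Icc 1 m,
            (1 / 2) * (n : ℝ) ^ (-q) * (((m : ℝ)) ^ (2 * p + ε) + (R n ω) ^ (2 * p)) := by
      have h1 := Real.rpow_sum_le_const_mul_sum_rpow_of_nonneg (Finset.Icc 1 m) hp
        (fun n hn => hR_nonneg n (Finset.mem_Icc.mp hn).1 ω)
      have hcard : (((Finset.Icc 1 m).card : ℕ) : ℝ) = (m : ℝ) := by
        rw [Nat.card_Icc]; simp
      rw [hcard] at h1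
      calc (∑ n ∈ Finset.Icc 1 m, R n ω) ^ p
          ≤ (m : ℝ) ^ (p - 1) * ∑ n ∈ Finset.Icc 1 m, (R n ω) ^ p := h1
        _ = ∑ n ∈ Finset.Icc 1 m, (m : ℝ) ^ (p - 1) * (R n ω) ^ p := by
            rw [Finset.mul_sum]
        _ ≤ _ := Finset.sum_le_sum hterm
    -- pass to ENNReal
    have hnn : ∀ n ∈ Finset.Icc 1 m,
        0 ≤ (1 / 2) * (n : ℝ) ^ (-q) * (((m : ℝ)) ^ (2 * p + ε) + (R n ω) ^ (2 * p)) := by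
      intro n hn
      have hr := hR_nonneg n (Finset.mem_Icc.mp hn).1 ω
      positivity
    calc ENNReal.ofReal ((∑ n ∈ Finset.Icc 1 m, R n ω) ^ p)
        ≤ ENNReal.ofReal (∑ n ∈ Finset.Icc 1 m,
            (1 / 2) * (n : ℝ) ^ (-q) * (((m : ℝ)) ^ (2 * p + ε) + (R n ω) ^ (2 * p))) :=
          ENNReal.ofReal_le_ofReal hS
      _ = ∑ n ∈ Finset.Icc 1 m, ENNReal.ofReal
            ((1 / 2) * (n : ℝ) ^ (-q) * (((m : ℝ)) ^ (2 * p + ε) + (R n ω) ^ (2 * p))) :=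
          ENNReal.ofReal_sum_of_nonneg hnn
      _ = ∑ n ∈ Finset.Icc 1 m, c n * (A ω + B n ω) := by
          apply Finset.sum_congr rfl
          intro n hn
          have hr := hR_nonneg n (Finset.mem_Icc.mp hn).1 ω
          have h0 : (0:ℝ) ≤ (1 / 2) * (n : ℝ) ^ (-q) := by positivity
          rw [ENNReal.ofReal_mul h0,
            ENNReal.ofReal_add (Real.rpow_nonneg (Nat.cast_nonneg _) _)
              (Real.rpow_nonneg hr _)]
      _ ≤ ∑' n, c n * (A ω + B n ω) := ENNReal.sum_le_tsum _
  -- integrate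
  have hstep : ∫⁻ ω, ENNReal.ofReal ((∑ n ∈ Finset.Icc 1 (M ω), R n ω) ^ p) ∂μ
      ≤ ∑' n, c n * (∫⁻ ω, A ω ∂μ + ∫⁻ ω, B n ω ∂μ) := by
    calc ∫⁻ ω, ENNReal.ofReal ((∑ n ∈ Finset.Icc 1 (M ω), R n ω) ^ p) ∂μ
        ≤ ∫⁻ ω, ∑' n, c n * (A ω + B n ω) ∂μ := lintegral_mono key
      _ = ∑' n, ∫⁻ ω, c n * (A ω + B n ω) ∂μ := by
          apply lintegral_tsum
          intro n
          exact ((hA_meas.add (hB_meas n)).const_mul (c n)).aemeasurable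
      _ = ∑' n, c n * (∫⁻ ω, A ω ∂μ + ∫⁻ ω, B n ω ∂μ) := by
          apply tsum_congr; intro n
          rw [lintegral_const_mul (c n) (f := fun ω => A ω + B n ω) (hA_meas.add (hB_meas n)),
            lintegral_add_left hA_meas]
  -- bound each term
  set K : ℝ≥0∞ := ∫⁻ ω, A ω ∂μ + ENNReal.ofReal C' with hK
  have hK_fin : K < ⊤ := by
    rw [hK]
    exact ENNReal.add_lt_top.mpr ⟨hA_int, ENNReal.ofReal_lt_top⟩
  have hbound : ∀ n, c n * (∫⁻ ω, A ω ∂μ + ∫⁻ ω, B n ω ∂μ) ≤ c n * K := by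
    intro n
    rcases Nat.eq_zero_or_pos n with h0 | h1
    · subst h0
      have : c 0 = 0 := by
        rw [hc]
        simp [Real.zero_rpow (ne_of_lt (by linarith : -q < 0))]
      simp [this]
    · apply mul_le_mul_right
      rw [hK]
      exact add_le_add_right (hR_mom n h1) _
  have hc_sum : ∑' n, c n < ⊤ := by
    have hsummable : Summable (fun n : ℕ => (1 / 2) * (n : ℝ) ^ (-q)) := by
      apply Summable.mul_left
      exact Real.summable_nat_rpow.mpr (by linarith)
    have hnn : ∀ n : ℕ, 0 ≤ (1 / 2) * (n : ℝ) ^ (-q) := fun n => by positivity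
    rw [hc, ← ENNReal.ofReal_tsum_of_nonneg hnn hsummable]
    exact ENNReal.ofReal_lt_top
  calc ∫⁻ ω, ENNReal.ofReal ((∑ n ∈ Finset.Icc 1 (M ω), R n ω) ^ p) ∂μ
      ≤ ∑' n, c n * (∫⁻ ω, A ω ∂μ + ∫⁻ ω, B n ω ∂μ) := hstep
    _ ≤ ∑' n, c n * K := ENNReal.tsum_le_tsum hbound
    _ = (∑' n, c n) * K := ENNReal.tsum_mul_right
    _ < ⊤ := ENNReal.mul_lt_top hc_sum hK_fin
end

section
/- For any q ∈ [0,∞), r ∈ (0,∞], α ∈ (0,1) and u ∈ [0,∞), the inequality ∫_0^r (1 − e^{−ux}) e^{−qx} x^{−α−1} dx ≥ Υ(u,r,q) holds. -/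
open MeasureTheory
open scoped ENNReal
open Set

lemma half_small {c : ℝ} (h0 : 0 ≤ c) (h1 : c ≤ 1) :
    c / 2 ≤ 1 - Real.exp (-c) := by
  have h := Real.add_one_le_exp c
  have hp : Real.exp (-c) * Real.exp c = 1 := by rw [← Real.exp_add]; simp
  have he : 0 < Real.exp (-c) := Real.exp_pos _
  nlinarith [Real.exp_pos c]

lemma half_big {c : ℝ} (h : 1 ≤ c) : (1:ℝ)/2 ≤ 1 - Real.exp (-c) := by
  have h2 : Real.exp (-c) ≤ Real.exp (-1) := Real.exp_le_exp.2 (by linarith)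
  have h3 : (2:ℝ) ≤ Real.exp 1 := by have := Real.add_one_le_exp 1; linarith
  have h4 : Real.exp (-1) ≤ 1/2 := by
    rw [Real.exp_neg]
    rw [inv_le_comm₀ (Real.exp_pos 1) (by norm_num)]
    simpa using h3
  linarith

lemma integral_exp_Ioc (c : ℝ) (hc : 0 < c) {a b : ℝ} (hab : a ≤ b) :
    ∫ y in Ioc a b, Real.exp (-(c*y)) = (Real.exp (-(c*a)) - Real.exp (-(c*b))) / c := by
  rw [← intervalIntegral.integral_of_le hab]
  have hd : ∀ x ∈ uIcc a b, HasDerivAt (fun y => -(Real.exp (-(c*y)) / c)) (Real.exp (-(c*x))) x := by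
    intro x _
    have h1 : HasDerivAt (fun y : ℝ => -(c*y)) (-c) x := by
      simpa [Pi.neg_def] using ((hasDerivAt_id x).const_mul c).neg
    have h2 := (h1.exp.div_const c).fun_neg
    have e : Real.exp (-(c*x)) = -(Real.exp (-(c * x)) * -c / c) := by
      rw [mul_neg, neg_div, neg_neg, mul_div_cancel_right₀ _ hc.ne']
    rw [e]; exact h2
  rw [intervalIntegral.integral_eq_sub_of_hasDerivAt hd
    ((Real.continuous_exp.comp (continuous_const.mul continuous_id).neg).intervalIntegrable _ _)]
  ring

lemma fubini_key {s a b : ℝ} (hs : 0 < s) (ha : 0 ≤ a) (hab : a ≤ b) :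
    ∫ x in Ioc 0 s, (Real.exp (-(a*x)) - Real.exp (-(b*x))) / x
      = ∫ t in Ioc a b, (1 - Real.exp (-(t*s))) / t := by
  have h1 : ∫ x in Ioc 0 s, (Real.exp (-(a*x)) - Real.exp (-(b*x))) / x
      = ∫ x in Ioc 0 s, ∫ t in Ioc a b, Real.exp (-(t*x)) := by
    apply setIntegral_congr_fun measurableSet_Ioc
    intro x hx
    show _ = ∫ t in Ioc a b, Real.exp (-(t*x))
    have : ∫ t in Ioc a b, Real.exp (-(t*x)) = ∫ t in Ioc a b, Real.exp (-(x*t)) := by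
      congr 1; ext t; ring_nf
    rw [this, integral_exp_Ioc x hx.1 hab]
    ring_nf
  have h2 : ∀ t ∈ Ioc a b, ∫ x in Ioc 0 s, Real.exp (-(t*x)) = (1 - Real.exp (-(t*s))) / t := by
    intro t ht
    have ht0 : 0 < t := lt_of_le_of_lt ha ht.1
    rw [integral_exp_Ioc t ht0 hs.le]
    simp
  have hint : Integrable (Function.uncurry fun x t => Real.exp (-(t*x)))
      ((volume.restrict (Ioc 0 s)).prod (volume.restrict (Ioc a b))) := by
    rw [Measure.prod_restrict]
    have hfin : (volume.prod volume) (Ioc 0 s ×ˢ Ioc a b) < ⊤ := by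
      rw [Measure.prod_prod]
      exact ENNReal.mul_lt_top measure_Ioc_lt_top measure_Ioc_lt_top
    apply Integrable.mono' (g := fun _ => (1:ℝ))
      (integrableOn_const hfin.ne)
    · exact (Real.continuous_exp.comp (continuous_snd.mul continuous_fst).neg).aestronglyMeasurable
    · filter_upwards [ae_restrict_mem (measurableSet_Ioc.prod measurableSet_Ioc)] with z hz
      have h1 : 0 < z.1 := hz.1.1
      have h2 : 0 ≤ z.2 := le_trans ha hz.2.1.le
      rw [Function.uncurry, Real.norm_eq_abs, abs_of_pos (Real.exp_pos _)]
      exact Real.exp_le_one_iff.2 (by nlinarith)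
  rw [h1, MeasureTheory.integral_integral_swap hint]
  exact setIntegral_congr_fun measurableSet_Ioc h2


/-- The function `Υ(u, r, q)` from the paper. Note that for `r ∈ (0, ∞]` and
`s := min {r, 1}` one has `1 / s = max {1 / r, 1}` (with `min {∞, 1} = 1` and
`max {1/∞, 1} = 1`). -/
noncomputable def Upsilon (u : ℝ) (r : ℝ≥0∞) (q : ℝ) : ℝ :=
  (1 / 2) *
    (if u + q < 1 / (min r 1).toReal then u * (min r 1).toReal
     else if q < 1 / (min r 1).toReal then
       1 - (min r 1).toReal * q + Real.log ((u + q) * (min r 1).toReal)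
     else Real.log (1 + u / q))

/-- For `q ∈ [0,∞)`, `r ∈ (0,∞]`, `α ∈ (0,1)`, `u ∈ [0,∞)`,
`∫_0^r (1 − e^{−ux}) e^{−qx} x^{−α−1} dx ≥ Υ(u,r,q)`. -/
theorem stmt_2 (q α u : ℝ) (r : ℝ≥0∞) (hq : 0 ≤ q) (hr : 0 < r)
    (hα : 0 < α) (hα1 : α < 1) (hu : 0 ≤ u) :
    Upsilon u r q ≤
      ∫ x in {x : ℝ | 0 < x ∧ ENNReal.ofReal x < r},
        (1 - Real.exp (-(u * x))) * Real.exp (-(q * x)) * x ^ (-α - 1) := by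
  set s : ℝ := (min r 1).toReal with hs_def
  have hmin_ne : min r 1 ≠ ⊤ := ne_top_of_le_ne_top (by simp) (min_le_right r 1)
  have hmin_pos : (0:ℝ≥0∞) < min r 1 := lt_min hr (by norm_num)
  have hs0 : 0 < s := ENNReal.toReal_pos hmin_pos.ne' hmin_ne
  have hs1 : s ≤ 1 := by
    have h := ENNReal.toReal_mono (by simp : (1:ℝ≥0∞) ≠ ⊤) (min_le_right r 1)
    simpa using h
  set f : ℝ → ℝ := fun x => (1 - Real.exp (-(u * x))) * Real.exp (-(q * x)) * x ^ (-α - 1)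
    with hf_def
  set D := {x : ℝ | 0 < x ∧ ENNReal.ofReal x < r} with hD_def
  have hDmeas : MeasurableSet D := by
    have : D = Ioi 0 ∩ ENNReal.ofReal ⁻¹' (Iio r) := by
      ext x; simp [hD_def, mem_Ioi, and_comm]
    rw [this]
    exact measurableSet_Ioi.inter (ENNReal.measurable_ofReal measurableSet_Iio)
  have hIooD : Ioo 0 s ⊆ D := by
    intro x hx
    refine ⟨hx.1, ?_⟩
    have h1 : ENNReal.ofReal x < ENNReal.ofReal s :=
      (ENNReal.ofReal_lt_ofReal_iff hs0).2 hx.2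
    rw [ENNReal.ofReal_toReal hmin_ne] at h1
    exact h1.trans_le (min_le_left r 1)
  have hf_nonneg : ∀ x : ℝ, 0 < x → 0 ≤ f x := by
    intro x hx
    have h1 : Real.exp (-(u*x)) ≤ 1 := Real.exp_le_one_iff.2 (by nlinarith)
    have h2 := (Real.exp_pos (-(q*x))).le
    have h3 := Real.rpow_nonneg hx.le (-α-1)
    exact mul_nonneg (mul_nonneg (by linarith) h2) h3
  have hf_meas : Measurable f := by fun_prop
  have hub1 : ∀ x : ℝ, 0 < x → 1 - Real.exp (-(u*x)) ≤ u*x := by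
    intro x hx
    have := Real.add_one_le_exp (-(u*x))
    linarith
  have hexpq : ∀ x : ℝ, 0 < x → Real.exp (-(q*x)) ≤ 1 := by
    intro x hx
    exact Real.exp_le_one_iff.2 (by nlinarith)
  have hfIoi : IntegrableOn f (Ioi 0) := by
    have hA : IntegrableOn f (Ioc 0 1) := by
      have hmaj : IntegrableOn (fun x : ℝ => u * x ^ (-α)) (Ioc 0 1) := by
        have := (intervalIntegral.intervalIntegrable_rpow' (a := 0) (b := 1)
          (by linarith : (-1:ℝ) < -α)).def'
        simpa [IntegrableOn, uIoc_of_le (zero_le_one (α := ℝ))] using this.const_mul u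
      apply Integrable.mono' hmaj hf_meas.aestronglyMeasurable
      rw [ae_restrict_iff' measurableSet_Ioc]
      filter_upwards with x hx
      have hx0 : 0 < x := hx.1
      rw [Real.norm_eq_abs, abs_of_nonneg (hf_nonneg x hx0)]
      have h3 : (0:ℝ) ≤ x ^ (-α-1) := Real.rpow_nonneg hx0.le _
      have h4 : f x ≤ u * x * x ^ (-α-1) := by
        have e1 : 1 - Real.exp (-(u*x)) ≤ u*x := hub1 x hx0
        have e0 : 0 ≤ 1 - Real.exp (-(u*x)) := by
          have : Real.exp (-(u*x)) ≤ 1 := Real.exp_le_one_iff.2 (by nlinarith)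
          linarith
        have e2 : Real.exp (-(q*x)) ≤ 1 := hexpq x hx0
        calc f x ≤ (u*x) * Real.exp (-(q*x)) * x ^ (-α-1) := by
              apply mul_le_mul_of_nonneg_right _ h3
              exact mul_le_mul_of_nonneg_right e1 (Real.exp_pos _).le
          _ ≤ (u*x) * 1 * x ^ (-α-1) := by
              apply mul_le_mul_of_nonneg_right _ h3
              apply mul_le_mul_of_nonneg_left e2 (by positivity)
          _ = u * x * x ^ (-α-1) := by ring
      have h5 : x * x ^ (-α-1) = x ^ (-α) := by
        have h6 := Real.rpow_add hx0 1 (-α-1)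
        rw [Real.rpow_one] at h6
        rw [show (1:ℝ) + (-α-1) = -α by ring] at h6
        exact h6.symm
      calc f x ≤ u * x * x ^ (-α-1) := h4
        _ = u * (x * x ^ (-α-1)) := by ring
        _ = u * x ^ (-α) := by rw [h5]
    have hB : IntegrableOn f (Ioi 1) := by
      have hmaj : IntegrableOn (fun x : ℝ => x ^ (-α-1)) (Ioi 1) :=
        integrableOn_Ioi_rpow_of_lt (by linarith) one_pos
      apply Integrable.mono' hmaj hf_meas.aestronglyMeasurable
      rw [ae_restrict_iff' measurableSet_Ioi]
      filter_upwards with x hx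
      have hx0 : (0:ℝ) < x := lt_trans one_pos hx
      rw [Real.norm_eq_abs, abs_of_nonneg (hf_nonneg x hx0)]
      have h3 : (0:ℝ) ≤ x ^ (-α-1) := Real.rpow_nonneg hx0.le _
      have e0 : Real.exp (-(u*x)) ≤ 1 := Real.exp_le_one_iff.2 (by nlinarith)
      have e0' := (Real.exp_pos (-(u*x))).le
      have e2 : Real.exp (-(q*x)) ≤ 1 := hexpq x hx0
      have e2' := (Real.exp_pos (-(q*x))).le
      have key : (1 - Real.exp (-(u*x))) * Real.exp (-(q*x)) ≤ 1 := by nlinarith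
      calc f x = (1 - Real.exp (-(u*x))) * Real.exp (-(q*x)) * x ^ (-α-1) := rfl
        _ ≤ 1 * x ^ (-α-1) := mul_le_mul_of_nonneg_right key h3
        _ = x ^ (-α-1) := one_mul _
    have : Ioc (0:ℝ) 1 ∪ Ioi 1 = Ioi 0 := Ioc_union_Ioi_eq_Ioi zero_le_one
    rw [← this]
    exact hA.union hB
  have hfD : IntegrableOn f D := hfIoi.mono_set (fun x hx => hx.1)
  have step1 : ∫ x in Ioo 0 s, f x ≤ ∫ x in D, f x := by
    apply setIntegral_mono_set hfD
    · rw [Filter.EventuallyLE, ae_restrict_iff' hDmeas]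
      filter_upwards with x hx
      exact hf_nonneg x hx.1
    · exact HasSubset.Subset.eventuallyLE hIooD
  set g : ℝ → ℝ := fun x => (Real.exp (-(q*x)) - Real.exp (-((u+q)*x))) / x with hg_def
  have hg_eq : ∀ x : ℝ, 0 < x → g x = (1 - Real.exp (-(u*x))) * Real.exp (-(q*x)) / x := by
    intro x hx
    have h7 : Real.exp (-((u+q)*x)) = Real.exp (-(u*x)) * Real.exp (-(q*x)) := by
      rw [← Real.exp_add]; ring_nf
    show (Real.exp (-(q*x)) - Real.exp (-((u+q)*x))) / x = _
    rw [h7]; ring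
  have hg_nonneg : ∀ x : ℝ, 0 < x → 0 ≤ g x := by
    intro x hx
    rw [hg_eq x hx]
    have h1 : Real.exp (-(u*x)) ≤ 1 := Real.exp_le_one_iff.2 (by nlinarith)
    exact div_nonneg (mul_nonneg (by linarith) (Real.exp_pos _).le) hx.le
  have hg_le_u : ∀ x : ℝ, 0 < x → g x ≤ u := by
    intro x hx
    rw [hg_eq x hx, div_le_iff₀ hx]
    have e1 : 1 - Real.exp (-(u*x)) ≤ u*x := hub1 x hx
    have e0 : 0 ≤ 1 - Real.exp (-(u*x)) := by
      have : Real.exp (-(u*x)) ≤ 1 := Real.exp_le_one_iff.2 (by nlinarith)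
      linarith
    calc (1 - Real.exp (-(u*x))) * Real.exp (-(q*x)) ≤ (1 - Real.exp (-(u*x))) * 1 :=
          mul_le_mul_of_nonneg_left (hexpq x hx) e0
      _ ≤ u * x := by linarith
  have hg_meas : Measurable g := by
    apply Measurable.div
    · exact ((measurable_const.mul measurable_id).neg.exp.sub
        (measurable_const.mul measurable_id).neg.exp)
    · exact measurable_id
  have hg_int : IntegrableOn g (Ioo 0 s) := by
    apply Integrable.mono' (g := fun _ => u)
      (integrableOn_const measure_Ioo_lt_top.ne) hg_meas.aestronglyMeasurable
    rw [ae_restrict_iff' measurableSet_Ioo]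
    filter_upwards with x hx
    rw [Real.norm_eq_abs, abs_of_nonneg (hg_nonneg x hx.1)]
    exact hg_le_u x hx.1
  have step2 : ∫ x in Ioo 0 s, g x ≤ ∫ x in Ioo 0 s, f x := by
    apply setIntegral_mono_on hg_int (hfD.mono_set hIooD) measurableSet_Ioo
    intro x hx
    rw [hg_eq x hx.1]
    have hrp : x⁻¹ ≤ x ^ (-α-1) := by
      have h := Real.rpow_le_rpow_of_exponent_ge hx.1 (le_trans hx.2.le hs1)
        (by linarith : -α-1 ≤ (-1:ℝ))
      rwa [Real.rpow_neg_one] at h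
    have e0 : 0 ≤ (1 - Real.exp (-(u*x))) * Real.exp (-(q*x)) := by
      have h1 : Real.exp (-(u*x)) ≤ 1 := Real.exp_le_one_iff.2 (by nlinarith [hx.1])
      exact mul_nonneg (by linarith) (Real.exp_pos _).le
    calc (1 - Real.exp (-(u*x))) * Real.exp (-(q*x)) / x
        = (1 - Real.exp (-(u*x))) * Real.exp (-(q*x)) * x⁻¹ := by ring
      _ ≤ (1 - Real.exp (-(u*x))) * Real.exp (-(q*x)) * x ^ (-α-1) :=
          mul_le_mul_of_nonneg_left hrp e0
      _ = f x := rfl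
  have step3 : ∫ x in Ioo 0 s, g x = ∫ t in Ioc q (u+q), (1 - Real.exp (-(t*s))) / t := by
    rw [← integral_Ioc_eq_integral_Ioo]
    exact fubini_key hs0 hq (by linarith)
  set h : ℝ → ℝ := fun t => (1 - Real.exp (-(t*s))) / t with hh_def
  have hh_nonneg : ∀ t : ℝ, 0 < t → 0 ≤ h t := by
    intro t ht
    have h1 : Real.exp (-(t*s)) ≤ 1 := Real.exp_le_one_iff.2 (by nlinarith)
    exact div_nonneg (by linarith) ht.le
  have hh_le : ∀ t : ℝ, 0 < t → h t ≤ s := by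
    intro t ht
    show (1 - Real.exp (-(t*s))) / t ≤ s
    rw [div_le_iff₀ ht]
    have := Real.add_one_le_exp (-(t*s))
    nlinarith
  have hh_meas : Measurable h := by
    apply Measurable.div
    · exact measurable_const.sub (measurable_id.mul_const s).neg.exp
    · exact measurable_id
  have hh_int : ∀ a b : ℝ, 0 ≤ a → IntegrableOn h (Ioc a b) := by
    intro a b ha
    apply Integrable.mono' (g := fun _ => s)
      (integrableOn_const measure_Ioc_lt_top.ne) hh_meas.aestronglyMeasurable
    rw [ae_restrict_iff' measurableSet_Ioc]
    filter_upwards with t ht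
    have ht0 : 0 < t := lt_of_le_of_lt ha ht.1
    rw [Real.norm_eq_abs, abs_of_nonneg (hh_nonneg t ht0)]
    exact hh_le t ht0
  -- lower bound for the "log part" integrals
  have hlog : ∀ a : ℝ, 1/s ≤ a → ∀ b : ℝ, a ≤ b →
      Real.log (b/a) / 2 ≤ ∫ t in Ioc a b, h t := by
    intro a haa b hab
    have ha0 : 0 < a := lt_of_lt_of_le (by positivity) haa
    have hb0 : 0 < b := lt_of_lt_of_le ha0 hab
    have hlow : ∀ t ∈ Ioc a b, (1/2) * t⁻¹ ≤ h t := by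
      intro t ht
      have ht0 : 0 < t := ha0.trans ht.1
      have hts1 : 1 ≤ t * s := by
        have h2 : 1/s ≤ t := le_trans haa ht.1.le
        rwa [div_le_iff₀ hs0] at h2
      have hhalf := half_big hts1
      show (1/2) * t⁻¹ ≤ (1 - Real.exp (-(t*s))) / t
      rw [show (1:ℝ)/2 * t⁻¹ = (1/2)/t by ring]
      rw [div_le_div_iff₀ ht0 ht0]
      nlinarith
    have hinv_int : IntegrableOn (fun t : ℝ => (1/2) * t⁻¹) (Ioc a b) := by
      have hsub : Icc a b ⊆ {(0:ℝ)}ᶜ := by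
        intro x hx
        exact (ne_of_gt (lt_of_lt_of_le ha0 hx.1))
      have hcont : ContinuousOn (fun t : ℝ => (1/2) * t⁻¹) (Icc a b) :=
        continuousOn_const.mul (continuousOn_inv₀.mono hsub)
      exact (hcont.integrableOn_compact isCompact_Icc).mono_set Ioc_subset_Icc_self
    have hmono := setIntegral_mono_on hinv_int (hh_int a b ha0.le) measurableSet_Ioc hlow
    have hval : ∫ t in Ioc a b, (1/2) * t⁻¹ = Real.log (b/a) / 2 := by
      rw [← intervalIntegral.integral_of_le hab, intervalIntegral.integral_const_mul,
        integral_inv_of_pos ha0 hb0]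
      ring
    rw [hval] at hmono
    exact hmono
  have step4 : Upsilon u r q ≤ ∫ t in Ioc q (u+q), h t := by
    rw [Upsilon, ← hs_def]
    by_cases hc1 : u + q < 1/s
    · rw [if_pos hc1]
      have hlow : ∀ t ∈ Ioc q (u+q), s/2 ≤ h t := by
        intro t ht
        have ht0 : 0 < t := lt_of_le_of_lt hq ht.1
        have hts1 : t * s ≤ 1 := by
          have h1 : t ≤ u + q := ht.2
          have h2 : (u+q) * s < 1 := (lt_div_iff₀ hs0).1 hc1
          nlinarith
        have hhalf := half_small (by positivity : (0:ℝ) ≤ t*s) hts1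
        show s/2 ≤ (1 - Real.exp (-(t*s))) / t
        rw [le_div_iff₀ ht0]
        nlinarith
      have hmono := setIntegral_mono_on (integrableOn_const measure_Ioc_lt_top.ne)
        (hh_int q (u+q) hq) measurableSet_Ioc hlow
      rw [setIntegral_const, measureReal_def, Real.volume_Ioc] at hmono
      have hv : (ENNReal.ofReal (u + q - q)).toReal = u := by
        rw [ENNReal.toReal_ofReal (by linarith)]; ring
      rw [hv, smul_eq_mul] at hmono
      calc 1/2 * (u * s) = u * (s/2) := by ring
        _ ≤ _ := hmono
    · rw [if_neg hc1]
      push_neg at hc1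
      by_cases hc2 : q < 1/s
      · rw [if_pos hc2]
        have hsplit : Ioc q (1/s) ∪ Ioc (1/s) (u+q) = Ioc q (u+q) :=
          Ioc_union_Ioc_eq_Ioc hc2.le hc1
        have hint1 := hh_int q (1/s) hq
        have hint2 := hh_int (1/s) (u+q) (by positivity)
        have hsum : ∫ t in Ioc q (u+q), h t
            = (∫ t in Ioc q (1/s), h t) + ∫ t in Ioc (1/s) (u+q), h t := by
          rw [← hsplit, setIntegral_union (Ioc_disjoint_Ioc_of_le le_rfl) measurableSet_Ioc hint1 hint2]
        have hT1 : (1 - s*q)/2 ≤ ∫ t in Ioc q (1/s), h t := by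
          have hlow : ∀ t ∈ Ioc q (1/s), s/2 ≤ h t := by
            intro t ht
            have ht0 : 0 < t := lt_of_le_of_lt hq ht.1
            have hts1 : t * s ≤ 1 := (le_div_iff₀ hs0).1 ht.2
            have hhalf := half_small (by positivity : (0:ℝ) ≤ t*s) hts1
            show s/2 ≤ (1 - Real.exp (-(t*s))) / t
            rw [le_div_iff₀ ht0]
            nlinarith
          have hmono := setIntegral_mono_on (integrableOn_const measure_Ioc_lt_top.ne)
            hint1 measurableSet_Ioc hlow
          rw [setIntegral_const, measureReal_def, Real.volume_Ioc,
            ENNReal.toReal_ofReal (by linarith : (0:ℝ) ≤ 1/s - q), smul_eq_mul] at hmono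
          calc (1 - s*q)/2 = (1/s - q) * (s/2) := by field_simp
            _ ≤ _ := hmono
        have hT2 : Real.log ((u+q)*s) / 2 ≤ ∫ t in Ioc (1/s) (u+q), h t := by
          have := hlog (1/s) le_rfl (u+q) hc1
          have hrw : (u+q)/(1/s) = (u+q)*s := by
            field_simp
          rwa [hrw] at this
        rw [hsum]
        linarith
      · rw [if_neg hc2]
        push_neg at hc2
        have hq0 : 0 < q := lt_of_lt_of_le (by positivity) hc2
        have := hlog q hc2 (u+q) (by linarith)
        have hrw : (u+q)/q = 1 + u/q := by rw [add_comm u q, add_div, div_self hq0.ne']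
        rw [hrw] at this
        linarith
  calc Upsilon u r q ≤ ∫ t in Ioc q (u+q), h t := step4
    _ = ∫ x in Ioo 0 s, g x := step3.symm
    _ ≤ ∫ x in Ioo 0 s, f x := step2
    _ ≤ ∫ x in D, f x := step1
end

section
/- Let ϖ₁, ϖ₂ : (0,∞) → [0,∞) be measurable functions satisfying ∫_0^∞ min{1,t} ϖ_i(t) dt < ∞ for i = 1,2 (i.e. they are Lévy densities), and suppose there exist constants a > 0 and r₀ > 0 such that |ϖ₂(t) − ϖ₁(t)| ≤ a·t·ϖ₁(t) for all t ∈ (0, r₀]. Then there exist constants b > 0 and r ∈ (0, r₀] and a measurable function ξ̄ : (0,∞) → [0,∞) with ∫_0^∞ ξ̄(t) dt < ∞, such that ϖ₂(t) = e^{−bt} ϖ₁(t)·1{t ≤ r} + ξ̄(t) for all t > 0. -/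
open MeasureTheory
open scoped ENNReal

/-- Given two Lévy densities `ϖ₁`, `ϖ₂` on `(0,∞)` with
`|ϖ₂(t) − ϖ₁(t)| ≤ a·t·ϖ₁(t)` for `t ∈ (0, r₀]`, there exist `b > 0`, `r ∈ (0, r₀]` and a
nonnegative measurable function `ξ̄` with finite total mass such that
`ϖ₂(t) = e^{−bt} ϖ₁(t)·1{t ≤ r} + ξ̄(t)` for all `t > 0`. -/
theorem stmt_6 (ϖ₁ ϖ₂ : ℝ → ℝ)
    (h1_meas : Measurable ϖ₁) (h2_meas : Measurable ϖ₂)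
    (h1_nonneg : ∀ t, 0 < t → 0 ≤ ϖ₁ t) (h2_nonneg : ∀ t, 0 < t → 0 ≤ ϖ₂ t)
    (h1_levy : (∫⁻ t in Set.Ioi (0 : ℝ), ENNReal.ofReal (min 1 t * ϖ₁ t)) < ⊤)
    (h2_levy : (∫⁻ t in Set.Ioi (0 : ℝ), ENNReal.ofReal (min 1 t * ϖ₂ t)) < ⊤)
    (a r₀ : ℝ) (ha : 0 < a) (hr₀ : 0 < r₀)
    (hclose : ∀ t ∈ Set.Ioc (0 : ℝ) r₀, |ϖ₂ t - ϖ₁ t| ≤ a * t * ϖ₁ t) :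
    ∃ (b r : ℝ) (ξ : ℝ → ℝ), 0 < b ∧ 0 < r ∧ r ≤ r₀ ∧ Measurable ξ ∧
      (∀ t, 0 < t → 0 ≤ ξ t) ∧
      (∫⁻ t in Set.Ioi (0 : ℝ), ENNReal.ofReal (ξ t)) < ⊤ ∧
      ∀ t, 0 < t → ϖ₂ t = Real.exp (-b * t) * ϖ₁ t * (if t ≤ r then 1 else 0) + ξ t := by
  set r : ℝ := min (min r₀ 1) (1 / (2 * a)) with hrdef
  have hr_pos : 0 < r := lt_min (lt_min hr₀ one_pos) (by positivity)
  have hr_le_r0 : r ≤ r₀ := (min_le_left _ _).trans (min_le_left _ _)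
  have hr_le_one : r ≤ 1 := (min_le_left _ _).trans (min_le_right _ _)
  have hr_le : r ≤ 1 / (2 * a) := min_le_right _ _
  set ξ : ℝ → ℝ := fun t =>
    if 0 < t then ϖ₂ t - Real.exp (-(2 * a) * t) * ϖ₁ t * (if t ≤ r then 1 else 0) else 0
    with hξdef
  -- key inequality: for 0 < t ≤ r, exp (-2at) ≤ 1 - a t
  have key : ∀ t, 0 < t → t ≤ r → Real.exp (-(2 * a) * t) ≤ 1 - a * t := by
    intro t ht htr
    have hat : a * t ≤ 1 / 2 := by
      have h' : a * t ≤ a * (1 / (2 * a)) :=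
        mul_le_mul_of_nonneg_left (htr.trans hr_le) ha.le
      have h'' : a * (1 / (2 * a)) = 1 / 2 := by field_simp
      linarith
    have h1 : (1 : ℝ) + 2 * a * t ≤ Real.exp (2 * a * t) := by
      have := Real.add_one_le_exp (2 * a * t); linarith
    have h2 : Real.exp (-(2 * a) * t) ≤ 1 / (1 + 2 * a * t) := by
      rw [neg_mul, Real.exp_neg]
      have hpos : (0 : ℝ) < 1 + 2 * a * t := by nlinarith
      rw [inv_eq_one_div]
      exact one_div_le_one_div_of_le hpos h1
    have h3 : 1 / (1 + 2 * a * t) ≤ 1 - a * t := by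
      rw [div_le_iff₀ (by nlinarith)]
      nlinarith [mul_nonneg (mul_nonneg ha.le ht.le) (by linarith : (0:ℝ) ≤ 1 - 2 * (a * t))]
    linarith
  have hξ_meas : Measurable ξ := by
    apply Measurable.ite measurableSet_Ioi
    · apply h2_meas.sub
      apply Measurable.mul
      · exact ((Real.measurable_exp.comp (measurable_const.mul measurable_id))).mul h1_meas
      · exact Measurable.ite measurableSet_Iic measurable_const measurable_const
    · exact measurable_const
  have hξ_nonneg : ∀ t, 0 < t → 0 ≤ ξ t := by
    intro t ht
    simp only [hξdef, if_pos ht]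
    by_cases htr : t ≤ r
    · rw [if_pos htr]
      have h1 := h1_nonneg t ht
      have hcl := hclose t ⟨ht, htr.trans hr_le_r0⟩
      have habs : ϖ₁ t - a * t * ϖ₁ t ≤ ϖ₂ t := by
        have := abs_le.mp hcl; linarith
      have hk : Real.exp (-(2 * a) * t) * ϖ₁ t ≤ (1 - a * t) * ϖ₁ t :=
        mul_le_mul_of_nonneg_right (key t ht htr) h1
      nlinarith
    · rw [if_neg htr]
      have := h2_nonneg t ht; linarith
  refine ⟨2 * a, r, ξ, by positivity, hr_pos, hr_le_r0, hξ_meas, hξ_nonneg, ?_, ?_⟩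
  · -- integrability
    set C : ℝ := max (3 * a) (1 / r) with hCdef
    have hC_pos : 0 < C := lt_max_of_lt_left (by positivity)
    have hbound : ∀ t, ENNReal.ofReal (ξ t) ≤
        ENNReal.ofReal (C * (min 1 t * ϖ₁ t)) + ENNReal.ofReal (C * (min 1 t * ϖ₂ t)) := by
      intro t
      by_cases ht : 0 < t
      · have h1 := h1_nonneg t ht
        have h2 := h2_nonneg t ht
        have hbnd : ξ t ≤ C * (min 1 t * ϖ₁ t) + C * (min 1 t * ϖ₂ t) := by
          simp only [hξdef, if_pos ht]
          by_cases htr : t ≤ r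
          · rw [if_pos htr]
            have hmin : min 1 t = t := min_eq_right (htr.trans hr_le_one)
            rw [hmin]
            have hcl := hclose t ⟨ht, htr.trans hr_le_r0⟩
            have habs : ϖ₂ t ≤ ϖ₁ t + a * t * ϖ₁ t := by
              have := abs_le.mp hcl; linarith
            have hexp : (1 - 2 * a * t) * ϖ₁ t ≤ Real.exp (-(2 * a) * t) * ϖ₁ t := by
              have h' : 1 - 2 * a * t ≤ Real.exp (-(2 * a) * t) := by
                have := Real.add_one_le_exp (-(2 * a) * t); linarith
              exact mul_le_mul_of_nonneg_right h' h1
            have h3a : 0 ≤ (C - 3 * a) * (t * ϖ₁ t) :=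
              mul_nonneg (sub_nonneg.mpr (le_max_left _ _)) (mul_nonneg ht.le h1)
            have hC2 : 0 ≤ C * (t * ϖ₂ t) := by positivity
            nlinarith
          · rw [if_neg htr]
            have hminr : r ≤ min 1 t := by
              rcases le_total 1 t with h | h
              · rw [min_eq_left h]; exact hr_le_one
              · rw [min_eq_right h]; exact le_of_not_ge htr
            have hrC : 1 ≤ C * r := (div_le_iff₀ hr_pos).mp (le_max_right _ _)
            have hCm : 1 ≤ C * min 1 t :=
              hrC.trans (mul_le_mul_of_nonneg_left hminr hC_pos.le)
            have h2' : ϖ₂ t ≤ C * min 1 t * ϖ₂ t := le_mul_of_one_le_left h2 hCm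
            have hC1 : 0 ≤ C * (min 1 t * ϖ₁ t) := by positivity
            nlinarith
        calc ENNReal.ofReal (ξ t) ≤ ENNReal.ofReal (C * (min 1 t * ϖ₁ t) + C * (min 1 t * ϖ₂ t)) :=
              ENNReal.ofReal_le_ofReal hbnd
        _ ≤ _ := ENNReal.ofReal_add_le
      · simp only [hξdef, if_neg ht, ENNReal.ofReal_zero]
        exact zero_le
    have hm1 : Measurable fun t => ENNReal.ofReal (C * (min 1 t * ϖ₁ t)) := by
      apply Measurable.ennreal_ofReal
      exact measurable_const.mul ((measurable_const.min measurable_id).mul h1_meas)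
    calc (∫⁻ t in Set.Ioi (0 : ℝ), ENNReal.ofReal (ξ t))
        ≤ ∫⁻ t in Set.Ioi (0 : ℝ),
            (ENNReal.ofReal (C * (min 1 t * ϖ₁ t)) + ENNReal.ofReal (C * (min 1 t * ϖ₂ t))) :=
          lintegral_mono hbound
      _ = (∫⁻ t in Set.Ioi (0 : ℝ), ENNReal.ofReal (C * (min 1 t * ϖ₁ t)))
          + ∫⁻ t in Set.Ioi (0 : ℝ), ENNReal.ofReal (C * (min 1 t * ϖ₂ t)) :=
          lintegral_add_left hm1 _
      _ = ENNReal.ofReal C * (∫⁻ t in Set.Ioi (0 : ℝ), ENNReal.ofReal (min 1 t * ϖ₁ t))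
          + ENNReal.ofReal C * ∫⁻ t in Set.Ioi (0 : ℝ), ENNReal.ofReal (min 1 t * ϖ₂ t) := by
          rw [← lintegral_const_mul' _ _ ENNReal.ofReal_ne_top,
            ← lintegral_const_mul' _ _ ENNReal.ofReal_ne_top]
          congr 1 <;>
            exact lintegral_congr fun t => by rw [ENNReal.ofReal_mul hC_pos.le]
      _ < ⊤ :=
          ENNReal.add_lt_top.mpr
            ⟨ENNReal.mul_lt_top ENNReal.ofReal_lt_top h1_levy,
              ENNReal.mul_lt_top ENNReal.ofReal_lt_top h2_levy⟩
  · intro t ht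
    simp only [hξdef, if_pos ht]
    ring
end

section
/- For every u > 0, q ≥ 0 and s > 0, the inequality ∫_q^{q+u} (1 − e^{−sy}) y^{−1} dy ≥ (1/2) · V(u,s,q) holds, where V(u,s,q) := u·s if u+q < 1/s; V(u,s,q) := 1 − s·q + log((u+q)·s) if q < 1/s ≤ u+q; and V(u,s,q) := log(1 + u/q) if 1/s ≤ q. Moreover V(u,s,q) = ∫_q^{q+u} min{1/y, s} dy. -/
open MeasureTheory

lemma key_exp (t : ℝ) (ht : 0 ≤ t) : (1 / 2) * min t 1 ≤ 1 - Real.exp (-t) := by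
  have h1 : Real.exp (-t) * Real.exp t = 1 := by rw [← Real.exp_add]; simp
  rcases le_or_gt t 1 with h | h
  · rw [min_eq_left h]
    have h2 := Real.add_one_le_exp t
    have h3 := (Real.exp_pos (-t)).le
    nlinarith [mul_nonneg h3 (sub_nonneg.2 h), mul_nonneg ht (sub_nonneg.2 h)]
  · rw [min_eq_right h.le]
    have h2 : Real.exp (-t) ≤ Real.exp (-1) := Real.exp_le_exp.2 (by linarith)
    have h3 : Real.exp (-1) * Real.exp 1 = 1 := by rw [← Real.exp_add]; simp
    have h4 := Real.add_one_le_exp 1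
    nlinarith [(Real.exp_pos (-1)).le]

lemma min_integrable (s : ℝ) (hs : 0 < s) (a b : ℝ) (ha : 0 ≤ a) :
    IntegrableOn (fun y : ℝ => min (1 / y) s) (Set.Ioo a b) := by
  apply Measure.integrableOn_of_bounded (M := s) measure_Ioo_lt_top.ne
  · exact ((measurable_const.div measurable_id).min measurable_const).aestronglyMeasurable
  · filter_upwards [ae_restrict_mem measurableSet_Ioo] with y hy
    have hy0 : 0 < y := lt_of_le_of_lt ha hy.1
    rw [Real.norm_eq_abs, abs_le]
    refine ⟨?_, min_le_right _ _⟩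
    have : (0:ℝ) ≤ min (1/y) s := le_min (by positivity) hs.le
    linarith

/-- For `u > 0`, `q ≥ 0` and `s > 0`,
`∫_q^{q+u} (1 − e^{−sy}) y^{−1} dy ≥ (1/2) V(u,s,q)` where `V(u,s,q)` is the three-regime
expression below; moreover `V(u,s,q) = ∫_q^{q+u} min {1/y, s} dy`. -/
theorem stmt_10 (u q s : ℝ) (hu : 0 < u) (hq : 0 ≤ q) (hs : 0 < s) :
    (1 / 2) * (if u + q < 1 / s then u * s
        else if q < 1 / s then 1 - s * q + Real.log ((u + q) * s)
        else Real.log (1 + u / q))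
      ≤ (∫ y in Set.Ioo q (q + u), (1 - Real.exp (-(s * y))) / y) ∧
    (if u + q < 1 / s then u * s
        else if q < 1 / s then 1 - s * q + Real.log ((u + q) * s)
        else Real.log (1 + u / q))
      = ∫ y in Set.Ioo q (q + u), min (1 / y) s := by
  have hb : q < q + u := by linarith
  have hs' : 0 < 1 / s := by positivity
  -- Part 2 : the exact evaluation
  have hV : (if u + q < 1 / s then u * s
        else if q < 1 / s then 1 - s * q + Real.log ((u + q) * s)
        else Real.log (1 + u / q))
      = ∫ y in Set.Ioo q (q + u), min (1 / y) s := by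
    split_ifs with h1 h2
    · -- everything below 1/s : min = s
      rw [setIntegral_congr_fun measurableSet_Ioo (g := fun _ => s)
          (fun y hy => by
            have hy0 : 0 < y := lt_of_le_of_lt hq hy.1
            have : s * y < 1 := by nlinarith [(lt_div_iff₀ hs).1 (show y < 1/s by linarith [hy.2])]
            exact min_eq_right ((le_div_iff₀ hy0).2 this.le)),
        setIntegral_const, measureReal_def, Real.volume_Ioo, smul_eq_mul,
        ENNReal.toReal_ofReal (by linarith)]
      ring
    · -- the mixed regime : split at c = 1/s
      have hcb : 1 / s ≤ q + u := by linarith [not_lt.1 h1]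
      have hi1 : IntervalIntegrable (fun y : ℝ => min (1/y) s) volume q (1/s) :=
        (intervalIntegrable_iff_integrableOn_Ioo_of_le h2.le).2 (min_integrable s hs _ _ hq)
      have hi2 : IntervalIntegrable (fun y : ℝ => min (1/y) s) volume (1/s) (q+u) :=
        (intervalIntegrable_iff_integrableOn_Ioo_of_le hcb).2 (min_integrable s hs _ _ hs'.le)
      have hsplit : (∫ y in Set.Ioo q (q + u), min (1 / y) s)
          = (∫ y in q..(1/s), min (1/y) s) + ∫ y in (1/s)..(q+u), min (1/y) s := by
        rw [← integral_Ioc_eq_integral_Ioo, ← intervalIntegral.integral_of_le hb.le,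
          ← intervalIntegral.integral_add_adjacent_intervals hi1 hi2]
      have hA : (∫ y in q..(1/s), min (1/y) s) = (1/s - q) * s := by
        rw [intervalIntegral.integral_of_le h2.le, integral_Ioc_eq_integral_Ioo,
          setIntegral_congr_fun measurableSet_Ioo (g := fun _ => s)
            (fun y hy => by
              have hy0 : 0 < y := lt_of_le_of_lt hq hy.1
              have : s * y < 1 := by nlinarith [(lt_div_iff₀ hs).1 hy.2]
              exact min_eq_right ((le_div_iff₀ hy0).2 this.le)),
          setIntegral_const, measureReal_def, Real.volume_Ioo, smul_eq_mul,
          ENNReal.toReal_ofReal (by linarith)]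
      have hB : (∫ y in (1/s)..(q+u), min (1/y) s) = Real.log ((q+u) * s) := by
        rw [intervalIntegral.integral_of_le hcb, integral_Ioc_eq_integral_Ioo,
          setIntegral_congr_fun measurableSet_Ioo (g := fun y => 1/y)
            (fun y hy => by
              have hy0 : 0 < y := lt_trans hs' hy.1
              have : 1 ≤ s * y := by nlinarith [(div_lt_iff₀ hs).1 hy.1]
              exact min_eq_left ((div_le_iff₀ hy0).2 (by linarith))),
          ← integral_Ioc_eq_integral_Ioo, ← intervalIntegral.integral_of_le hcb,
          integral_one_div (by
            rw [Set.uIcc_of_le hcb]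
            intro h; exact absurd h.1 (by linarith))]
        congr 1
        field_simp
      rw [hsplit, hA, hB]
      have h1s : (1/s - q) * s = 1 - s * q := by field_simp
      rw [h1s, add_comm u q]
    · -- everything above 1/s : min = 1/y
      have h3 : 1 / s ≤ q := not_lt.1 h2
      have hq0 : 0 < q := lt_of_lt_of_le hs' h3
      rw [setIntegral_congr_fun measurableSet_Ioo (g := fun y => 1/y)
          (fun y hy => by
            have hy0 : 0 < y := lt_trans hq0 hy.1
            have : 1 ≤ s * y := by
              have : 1/s < y := lt_of_le_of_lt h3 hy.1
              nlinarith [(div_lt_iff₀ hs).1 this]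
            exact min_eq_left ((div_le_iff₀ hy0).2 (by linarith))),
        ← integral_Ioc_eq_integral_Ioo, ← intervalIntegral.integral_of_le hb.le,
        integral_one_div (by
          rw [Set.uIcc_of_le hb.le]
          intro h; exact absurd h.1 (by linarith))]
      congr 1
      rw [add_div, div_self hq0.ne']
  refine ⟨?_, hV⟩
  -- Part 1 : the inequality
  have hfint : IntegrableOn (fun y : ℝ => (1 - Real.exp (-(s * y))) / y)
      (Set.Ioo q (q + u)) := by
    apply Measure.integrableOn_of_bounded (M := s) measure_Ioo_lt_top.ne
    · exact ((measurable_const.sub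
        ((measurable_id.const_mul s).neg.exp)).div measurable_id).aestronglyMeasurable
    · filter_upwards [ae_restrict_mem measurableSet_Ioo] with y hy
      have hy0 : 0 < y := lt_of_le_of_lt hq hy.1
      have he1 : Real.exp (-(s * y)) ≤ 1 :=
        Real.exp_le_one_iff.2 (by nlinarith)
      have he2 : 1 - s * y ≤ Real.exp (-(s * y)) := by
        have := Real.add_one_le_exp (-(s*y)); linarith
      rw [Real.norm_eq_abs, abs_le]
      constructor
      · have : (0:ℝ) ≤ (1 - Real.exp (-(s * y))) / y := by
          apply div_nonneg (by linarith) hy0.le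
        linarith
      · rw [div_le_iff₀ hy0]; linarith
  rw [hV, ← integral_const_mul]
  apply setIntegral_mono_on _ hfint measurableSet_Ioo
  · intro y hy
    have hy0 : 0 < y := lt_of_le_of_lt hq hy.1
    have hkey := key_exp (s * y) (by positivity)
    have hmin : min (1/y) s = min (s*y) 1 / y := by
      rw [← min_div_div_right hy0.le, mul_div_assoc, div_self hy0.ne', mul_one, min_comm]
    rw [hmin, ← mul_div_assoc]
    exact div_le_div_of_nonneg_right hkey hy0.le
  · exact (min_integrable s hs q (q+u) hq).const_mul _
end

section
/- Fix r ∈ (0,∞] and q > 0. Then lim_{u → 0+} Υ(u,r,q)/u = min{1/q, r, 1}/2. -/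
open MeasureTheory Filter Topology
open scoped ENNReal

theorem Real.tendsto_log_one_add_div_div_nhdsNE (q : ℝ) :
    Tendsto (fun u : ℝ => Real.log (1 + u / q) / u) (𝓝[≠] 0) (𝓝 q⁻¹) := by
  have hderiv : HasDerivAt (fun u : ℝ => Real.log (1 + u / q)) q⁻¹ 0 := by
    simpa using (((hasDerivAt_id (0 : ℝ)).div_const q).const_add 1).log (by simp)
  simpa [div_eq_inv_mul] using hderiv.tendsto_slope_zero

theorem ENNReal.toReal_min_one_pos {r : ℝ≥0∞} (hr : 0 < r) : 0 < (min r 1).toReal :=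
  ENNReal.toReal_pos (lt_min hr zero_lt_one).ne' (ne_top_of_le_ne_top ENNReal.one_ne_top
    (min_le_right r 1))

namespace Upsilon

variable {u q : ℝ} {r : ℝ≥0∞}

theorem eq_of_add_lt (h : u + q < 1 / (min r 1).toReal) :
    Upsilon u r q = u * (min r 1).toReal / 2 := by
  rw [Upsilon, if_pos h]
  ring

theorem eq_log_of_le (h : 1 / (min r 1).toReal ≤ q) (hu : 0 ≤ u) :
    Upsilon u r q = Real.log (1 + u / q) / 2 := by
  rw [Upsilon, if_neg (by linarith), if_neg h.not_gt]
  ring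

theorem tendsto_div_of_lt (h : q < 1 / (min r 1).toReal) :
    Tendsto (fun u : ℝ => Upsilon u r q / u) (𝓝[>] 0) (𝓝 ((min r 1).toReal / 2)) := by
  have hsmall : Set.Ioo (0 : ℝ) (1 / (min r 1).toReal - q) ∈ 𝓝[>] (0 : ℝ) :=
    Ioo_mem_nhdsGT (by linarith)
  refine tendsto_const_nhds.congr' ?_
  filter_upwards [hsmall] with u hu
  rw [eq_of_add_lt (by linarith [hu.2])]
  field_simp [hu.1.ne']

theorem tendsto_div_of_le (h : 1 / (min r 1).toReal ≤ q) :
    Tendsto (fun u : ℝ => Upsilon u r q / u) (𝓝[>] 0) (𝓝 (q⁻¹ / 2)) := by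
  refine (((Real.tendsto_log_one_add_div_div_nhdsNE q).mono_left
    (nhdsGT_le_nhdsNE 0)).div_const 2).congr' ?_
  filter_upwards [self_mem_nhdsWithin] with u (hu : 0 < u)
  rw [eq_log_of_le h hu.le]
  ring

end Upsilon

/-- For fixed `r` in `(0,oo]` and `q > 0`, `Upsilon u r q / u` tends to
`min {1/q, r, 1} / 2` as `u` tends to `0+` (with `min {1/q, oo} = 1/q`). -/
theorem stmt_13 (r : ℝ≥0∞) (q : ℝ) (hr : 0 < r) (hq : 0 < q) :
    Tendsto (fun u : ℝ => Upsilon u r q / u) (𝓝[>] 0)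
      (𝓝 (min (1 / q) (min r 1).toReal / 2)) := by
  have hs := ENNReal.toReal_min_one_pos hr
  rcases lt_or_ge q (1 / (min r 1).toReal) with hlt | hle
  · rw [min_eq_right ((le_one_div hq hs).mp hlt.le)]
    exact Upsilon.tendsto_div_of_lt hlt
  · rw [min_eq_left ((one_div_le hs hq).mp hle), one_div]
    exact Upsilon.tendsto_div_of_le hle
end

section
/- Let β > 0 and let σ : (0,1) → (0,∞) be measurable. Let X be a positive random variable whose distribution function satisfies P[X ≤ x] = ∫_0^1 exp(−σ(u) x^{−β}) du for all x > 0, and fix s > 0 with P[X < s] > 0. Let U' be a random variable on (0,1) with probability density proportional to u ↦ exp(−σ(u) s^{−β}), and let E' be exponential with rate 1, independent of U'. Then the random variable ( s^{−β} + E'/σ(U') )^{−1/β} has the conditional law of X given the event {X < s}. In particular, if U is uniform on (0,1) and E is exponential with rate 1, independent of U, then (σ(U)/E)^{1/β} has the same law as X. -/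
open MeasureTheory ProbabilityTheory
open scoped ENNReal
open Real Set Filter

section helpers

private lemma expTail {t : ℝ} (ht : 0 ≤ t) :
    expMeasure 1 {e : ℝ | t ≤ e} = ENNReal.ofReal (Real.exp (-t)) := by
  have hset : {e : ℝ | t ≤ e} = Set.Ici t := rfl
  rw [hset, show expMeasure 1 = volume.withDensity (exponentialPDF 1) from rfl,
    withDensity_apply _ measurableSet_Ici,
    setLIntegral_congr_fun measurableSet_Ici
      (fun e (he : t ≤ e) => by
        rw [exponentialPDF_of_nonneg (le_trans ht he), one_mul, one_mul]),
    ← ofReal_integral_eq_lintegral_ofReal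
      (by rw [← IntegrableOn, integrableOn_Ici_iff_integrableOn_Ioi]
          simpa using exp_neg_integrableOn_Ioi t one_pos)
      (ae_of_all _ fun e => (Real.exp_pos _).le),
    integral_Ici_eq_integral_Ioi, integral_exp_neg_Ioi]

private lemma expTail_nonpos {t : ℝ} (ht : t ≤ 0) :
    expMeasure 1 {e : ℝ | t ≤ e} = 1 := by
  haveI : IsProbabilityMeasure (expMeasure 1) := isProbabilityMeasure_expMeasure one_pos
  refine le_antisymm prob_le_one ?_
  have h0 := expTail (le_refl (0:ℝ))
  simp only [neg_zero, Real.exp_zero, ENNReal.ofReal_one] at h0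
  rw [← h0]
  exact measure_mono fun e (he : (0:ℝ) ≤ e) => le_trans ht he

private lemma exp_ae_pos : ∀ᵐ e ∂(expMeasure 1), 0 < e := by
  rw [ae_iff]
  have : {e : ℝ | ¬ 0 < e} = Set.Iic 0 := by ext e; simp
  rw [this, show expMeasure 1 = volume.withDensity (exponentialPDF 1) from rfl,
    withDensity_apply _ measurableSet_Iic]
  have : Set.Iic (0:ℝ) =ᵐ[volume] Set.Iio 0 := Iio_ae_eq_Iic.symm
  rw [setLIntegral_congr this,
    setLIntegral_congr_fun measurableSet_Iio
      (fun e (he : e < 0) => exponentialPDF_of_neg he), lintegral_zero]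

private lemma map_pair_apply {Ω : Type*} {m0 : MeasurableSpace Ω} {μ : Measure Ω}
    [IsProbabilityMeasure μ] {U E : Ω → ℝ} (hU : Measurable U) (hE : Measurable E)
    (hE_law : μ.map E = expMeasure 1) (hindep : IndepFun U E μ)
    {φ : ℝ → ℝ → ℝ} (hφ : Measurable (fun p : ℝ × ℝ => φ p.1 p.2)) (x : ℝ) :
    μ.map (fun ω => φ (U ω) (E ω)) (Set.Iic x)
      = ∫⁻ u, expMeasure 1 {e | φ u e ≤ x} ∂(μ.map U) := by
  haveI : IsProbabilityMeasure (μ.map U) := Measure.isProbabilityMeasure_map hU.aemeasurable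
  haveI : IsProbabilityMeasure (expMeasure 1) := isProbabilityMeasure_expMeasure one_pos
  have hpair : μ.map (fun ω => (U ω, E ω)) = (μ.map U).prod (expMeasure 1) := by
    rw [← hE_law]
    exact (indepFun_iff_map_prod_eq_prod_map_map hU.aemeasurable hE.aemeasurable).mp hindep
  have : (fun ω => φ (U ω) (E ω)) = (fun p : ℝ × ℝ => φ p.1 p.2) ∘ (fun ω => (U ω, E ω)) := rfl
  rw [this, ← Measure.map_map hφ (hU.prodMk hE), hpair,
    Measure.map_apply hφ measurableSet_Iic,
    Measure.prod_apply (hφ measurableSet_Iic)]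
  rfl

private lemma expMeasure_congr {S T : Set ℝ} (h : ∀ e : ℝ, 0 < e → (e ∈ S ↔ e ∈ T)) :
    expMeasure 1 S = expMeasure 1 T := by
  refine measure_congr (Filter.eventuallyEq_set.2 ?_)
  filter_upwards [exp_ae_pos] with e he using h e he

private lemma iff2 {β : ℝ} (hβ : 0 < β) {x a e : ℝ} (hx : 0 < x) (ha : 0 < a) (he : 0 < e) :
    (a / e) ^ (1 / β) ≤ x ↔ a * x ^ (-β) ≤ e := by
  rw [one_div, Real.rpow_inv_le_iff_of_pos (by positivity) hx.le hβ,
    div_le_iff₀ he, Real.rpow_neg hx.le, mul_inv_le_iff₀ (Real.rpow_pos_of_pos hx β)]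
  rw [mul_comm]

private lemma iff1 {β : ℝ} (hβ : 0 < β) {x s a e : ℝ} (hx : 0 < x) (hs : 0 < s)
    (ha : 0 < a) (he : 0 < e) :
    (s ^ (-β) + e / a) ^ (-1 / β) ≤ x ↔ a * (x ^ (-β) - s ^ (-β)) ≤ e := by
  have hbase : 0 < s ^ (-β) + e / a := by positivity
  have hx1 : (x ^ (-β)) ^ (-1 / β) = x := by
    rw [← Real.rpow_mul hx.le]
    rw [show -β * (-1 / β) = 1 by field_simp, Real.rpow_one]
  have hz : -1 / β < 0 := div_neg_of_neg_of_pos (by norm_num) hβ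
  constructor
  · intro h
    rw [← hx1] at h
    have h2 : x ^ (-β) ≤ s ^ (-β) + e / a :=
      (Real.rpow_le_rpow_iff_of_neg hbase (Real.rpow_pos_of_pos hx _) hz).mp h
    have h3 : x ^ (-β) - s ^ (-β) ≤ e / a := by linarith
    calc a * (x ^ (-β) - s ^ (-β)) ≤ a * (e / a) := mul_le_mul_of_nonneg_left h3 ha.le
      _ = e := by field_simp
  · intro h
    rw [← hx1]
    refine (Real.rpow_le_rpow_iff_of_neg hbase (Real.rpow_pos_of_pos hx _) hz).mpr ?_
    have h3 : x ^ (-β) - s ^ (-β) ≤ e / a := (le_div_iff₀ ha).mpr (by linarith [mul_comm a (x ^ (-β) - s ^ (-β))])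
    linarith
end helpers

/-- Let `b > 0` and `sigma : (0,1) -> (0,oo)` be measurable, and let `X`
be a positive random variable with `P[X <= x] = int_0^1 exp(-sigma(u) x^(-b)) du` for all
`x > 0`. Fix `s > 0` with `P[X < s] > 0`. If `U'` has density proportional to
`exp(-sigma(u) s^(-b))` on `(0,1)` and `E'` is a rate-one exponential independent of `U'`,
then `(s^(-b) + E'/sigma(U'))^(-1/b)` has the conditional law of `X` given `{X < s}`.
In particular, if `U` is uniform on `(0,1)` and `E` a rate-one exponential independent of
`U`, then `(sigma(U)/E)^(1/b)` has the same law as `X`. -/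
theorem stmt_17 {Ω : Type*} {m0 : MeasurableSpace Ω} {μ : Measure Ω} [IsProbabilityMeasure μ]
    (β : ℝ) (hβ : 0 < β)
    (σ : ℝ → ℝ) (hσ_meas : Measurable σ)
    (hσ_pos : ∀ u ∈ Set.Ioo (0 : ℝ) 1, 0 < σ u)
    (X : Ω → ℝ) (hX_meas : Measurable X) (hX_pos : ∀ᵐ ω ∂μ, 0 < X ω)
    (hX_cdf : ∀ x : ℝ, 0 < x →
      (μ {ω | X ω ≤ x}).toReal = ∫ u in Set.Ioo (0 : ℝ) 1, Real.exp (-σ u * x ^ (-β)))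
    (s : ℝ) (hs : 0 < s) (hXs : 0 < μ {ω | X ω < s})
    (U' E' : Ω → ℝ) (hU'_meas : Measurable U') (hE'_meas : Measurable E')
    (hU'_law : μ.map U' = volume.withDensity (fun u =>
      ENNReal.ofReal (Set.indicator (Set.Ioo (0 : ℝ) 1)
        (fun v => Real.exp (-σ v * s ^ (-β)) /
          ∫ w in Set.Ioo (0 : ℝ) 1, Real.exp (-σ w * s ^ (-β))) u)))
    (hE'_law : μ.map E' = expMeasure 1)
    (hU'E'_indep : IndepFun U' E' μ) :
    μ.map (fun ω => (s ^ (-β) + E' ω / σ (U' ω)) ^ (-1 / β)) =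
        (μ[|{ω | X ω < s}]).map X ∧
      ∀ U E : Ω → ℝ, Measurable U → Measurable E →
        μ.map U = volume.restrict (Set.Ioo (0 : ℝ) 1) →
        μ.map E = expMeasure 1 →
        IndepFun U E μ →
        μ.map (fun ω => (σ (U ω) / E ω) ^ (1 / β)) = μ.map X := by
  classical
  have hβneg : -β < 0 := neg_lt_zero.mpr hβ
  haveI : IsProbabilityMeasure (expMeasure 1) := isProbabilityMeasure_expMeasure one_pos
  have hmeas : ∀ c : ℝ, Measurable fun u => Real.exp (-σ u * c) :=
    fun c => (hσ_meas.neg.mul_const c).exp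
  have hint : ∀ c : ℝ, 0 ≤ c →
      IntegrableOn (fun u => Real.exp (-σ u * c)) (Set.Ioo (0:ℝ) 1) := by
    intro c hc
    refine Integrable.mono' (integrable_const 1) ((hmeas c).aestronglyMeasurable) ?_
    filter_upwards [ae_restrict_mem measurableSet_Ioo] with u hu
    rw [Real.norm_eq_abs, abs_of_pos (Real.exp_pos _)]
    refine Real.exp_le_one_iff.mpr ?_
    nlinarith [(hσ_pos u hu).le]
  have hXle : ∀ x : ℝ, 0 < x →
      μ {ω | X ω ≤ x} = ENNReal.ofReal (∫ u in Set.Ioo (0:ℝ) 1, Real.exp (-σ u * x ^ (-β))) := by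
    intro x hx
    rw [← hX_cdf x hx, ENNReal.ofReal_toReal (measure_ne_top μ _)]
  have hXle0 : ∀ x : ℝ, x ≤ 0 → μ {ω | X ω ≤ x} = 0 := by
    intro x hx
    refine measure_eq_zero_iff_ae_notMem.mpr ?_
    filter_upwards [hX_pos] with ω hω
    exact fun (h : X ω ≤ x) => absurd (lt_of_lt_of_le hω (le_trans h hx)) (lt_irrefl 0)
  set A : Set Ω := {ω | X ω < s} with hA
  have hA_meas : MeasurableSet A := hX_meas measurableSet_Iio
  have hXsne : μ A ≠ 0 := hXs.ne'
  set Z : ℝ := ∫ u in Set.Ioo (0:ℝ) 1, Real.exp (-σ u * s ^ (-β)) with hZ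
  have hZs : (μ {ω | X ω ≤ s}).toReal = Z := hX_cdf s hs
  have hApos : 0 < (μ A).toReal := ENNReal.toReal_pos hXsne (measure_ne_top μ A)
  have hAZ : (μ A).toReal ≤ Z := by
    rw [← hZs]
    exact ENNReal.toReal_mono (measure_ne_top μ _)
      (measure_mono fun ω (h : X ω < s) => h.le)
  have hZpos : 0 < Z := lt_of_lt_of_le hApos hAZ
  have hZA : Z ≤ (μ A).toReal := by
    set xs : ℕ → ℝ := fun n => s - s / (n + 2) with hxs
    have hx0 : ∀ n : ℕ, 0 < xs n ∧ xs n < s := by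
      intro n
      have hn2 : (0:ℝ) < (n:ℝ) + 2 := by positivity
      have h1 : s / ((n:ℝ) + 2) < s := by
        rw [div_lt_iff₀ hn2]; nlinarith
      have h2 : 0 < s / ((n:ℝ) + 2) := by positivity
      exact ⟨by simp only [hxs]; linarith, by simp only [hxs]; linarith⟩
    have htend : Tendsto xs atTop (nhds s) := by
      have h2 : Tendsto (fun n : ℕ => ((n:ℝ) + 2)) atTop atTop :=
        tendsto_atTop_add_const_right _ 2 tendsto_natCast_atTop_atTop
      have h3 : Tendsto (fun n : ℕ => s / ((n:ℝ) + 2)) atTop (nhds 0) :=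
        Tendsto.div_atTop tendsto_const_nhds h2
      simpa using tendsto_const_nhds.sub h3
    have hFt : Tendsto (fun n => ∫ u in Set.Ioo (0:ℝ) 1, Real.exp (-σ u * (xs n) ^ (-β)))
        atTop (nhds Z) := by
      rw [hZ]
      refine tendsto_integral_of_dominated_convergence (fun _ => (1:ℝ))
        (fun n => (hmeas _).aestronglyMeasurable) ?_ ?_ ?_
      · exact integrableOn_const (by simp [Real.volume_Ioo])
      · intro n
        filter_upwards [ae_restrict_mem measurableSet_Ioo] with u hu
        rw [Real.norm_eq_abs, abs_of_pos (Real.exp_pos _)]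
        refine Real.exp_le_one_iff.mpr ?_
        have h2 : (0:ℝ) ≤ (xs n) ^ (-β) := Real.rpow_nonneg (hx0 n).1.le _
        nlinarith [(hσ_pos u hu).le]
      · refine Eventually.of_forall fun u => ?_
        have h2 : Tendsto (fun n => (xs n) ^ (-β)) atTop (nhds (s ^ (-β))) :=
          ((Real.continuousAt_rpow_const s (-β) (Or.inl hs.ne')).tendsto).comp htend
        exact (Real.continuous_exp.tendsto _).comp (h2.const_mul (-σ u))
    have hFle : ∀ n, (∫ u in Set.Ioo (0:ℝ) 1, Real.exp (-σ u * (xs n) ^ (-β)))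
        ≤ (μ A).toReal := by
      intro n
      rw [← hX_cdf (xs n) (hx0 n).1]
      refine ENNReal.toReal_mono (measure_ne_top μ _) (measure_mono ?_)
      exact fun ω (h : X ω ≤ xs n) => lt_of_le_of_lt h (hx0 n).2
    exact le_of_tendsto hFt (Eventually.of_forall hFle)
  have hAeq : μ A = ENNReal.ofReal Z := by
    rw [← ENNReal.ofReal_toReal (measure_ne_top μ A)]
    exact congrArg _ (le_antisymm hAZ hZA)
  constructor
  · -- Part 1
    haveI : IsProbabilityMeasure (μ[|A]) := cond_isProbabilityMeasure hXsne
    haveI : IsProbabilityMeasure ((μ[|A]).map X) :=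
      Measure.isProbabilityMeasure_map hX_meas.aemeasurable
    have hφm : Measurable fun y : ℝ × ℝ => (s ^ (-β) + y.2 / σ y.1) ^ (-1 / β) := by
      exact (measurable_const.add (measurable_snd.div (hσ_meas.comp measurable_fst))).pow_const _
    have hTm : Measurable fun ω => (s ^ (-β) + E' ω / σ (U' ω)) ^ (-1 / β) :=
      hφm.comp (hU'_meas.prodMk hE'_meas)
    haveI : IsProbabilityMeasure (μ.map fun ω => (s ^ (-β) + E' ω / σ (U' ω)) ^ (-1 / β)) :=
      Measure.isProbabilityMeasure_map hTm.aemeasurable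
    refine Measure.ext_of_Iic _ _ fun x => ?_
    have hR : ((μ[|A]).map X) (Set.Iic x) = (μ A)⁻¹ * μ (A ∩ {ω | X ω ≤ x}) := by
      rw [Measure.map_apply hX_meas measurableSet_Iic, cond_apply hA_meas]
      rfl
    have hL : (μ.map fun ω => (s ^ (-β) + E' ω / σ (U' ω)) ^ (-1 / β)) (Set.Iic x)
        = ∫⁻ u, expMeasure 1 {e | (s ^ (-β) + e / σ u) ^ (-1 / β) ≤ x} ∂(μ.map U') :=
      map_pair_apply (φ := fun u e => (s ^ (-β) + e / σ u) ^ (-1 / β)) hU'_meas hE'_meas hE'_law hU'E'_indep hφm x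
    rw [hL, hR, hU'_law]
    set f : ℝ → ℝ≥0∞ := fun u =>
      ENNReal.ofReal (Set.indicator (Set.Ioo (0 : ℝ) 1)
        (fun v => Real.exp (-σ v * s ^ (-β)) / Z) u) with hfdef
    set G : ℝ → ℝ≥0∞ :=
      fun u => expMeasure 1 {e | (s ^ (-β) + e / σ u) ^ (-1 / β) ≤ x} with hGdef
    have hfm : Measurable f :=
      (((hmeas _).div_const Z).indicator measurableSet_Ioo).ennreal_ofReal
    have hGm : Measurable G := by
      have h : Measurable fun u : ℝ => expMeasure 1
          (Prod.mk u ⁻¹' ((fun y : ℝ × ℝ => (s ^ (-β) + y.2 / σ y.1) ^ (-1 / β)) ⁻¹' Set.Iic x)) :=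
        measurable_measure_prodMk_left (ν := expMeasure 1) (hφm measurableSet_Iic)
      exact h
    rw [lintegral_withDensity_eq_lintegral_mul volume hfm hGm]
    rcases le_or_gt x 0 with hx | hx
    · -- x ≤ 0 : both sides zero
      have hzero : ∀ u : ℝ, (f * G) u = 0 := by
        intro u
        by_cases hu : u ∈ Set.Ioo (0:ℝ) 1
        · have hG0 : G u = 0 := by
            rw [hGdef]
            refine (expMeasure_congr (T := (∅ : Set ℝ)) fun e he => ?_).trans measure_empty
            simp only [Set.mem_empty_iff_false, iff_false, Set.mem_setOf_eq]
            intro hle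
            have hb : 0 < s ^ (-β) + e / σ u := by
              have := hσ_pos u hu
              positivity
            have := Real.rpow_pos_of_pos hb (-1 / β)
            linarith
          show f u * G u = 0
          rw [hG0, mul_zero]
        · show f u * G u = 0
          rw [hfdef]
          simp [Set.indicator_of_notMem hu]
      rw [lintegral_congr hzero, lintegral_zero,
        measure_inter_null_of_null_right A (hXle0 x hx), mul_zero]
    · rcases lt_or_ge x s with hxs | hsx
      · -- 0 < x < s
        have hc : 0 < x ^ (-β) - s ^ (-β) :=
          sub_pos.mpr ((Real.rpow_lt_rpow_iff_of_neg hs hx hβneg).mpr hxs)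
        have hpt : ∀ u : ℝ, (f * G) u = Set.indicator (Set.Ioo (0:ℝ) 1)
            (fun v => ENNReal.ofReal (Real.exp (-σ v * x ^ (-β)) / Z)) u := by
          intro u
          show f u * G u = _
          by_cases hu : u ∈ Set.Ioo (0:ℝ) 1
          · have hσu := hσ_pos u hu
            have hG : G u = ENNReal.ofReal
                (Real.exp (-(σ u * (x ^ (-β) - s ^ (-β))))) := by
              rw [hGdef]
              exact (expMeasure_congr (fun e he => iff1 hβ hx hs hσu he)).trans
                (expTail (mul_nonneg hσu.le hc.le))
            rw [hG]
            simp only [hfdef]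
            rw [Set.indicator_of_mem hu, Set.indicator_of_mem hu,
              ← ENNReal.ofReal_mul (by positivity)]
            congr 1
            rw [div_mul_eq_mul_div, ← Real.exp_add]
            congr 2
            ring
          · simp only [hfdef]
            rw [Set.indicator_of_notMem hu, Set.indicator_of_notMem hu]
            simp
        rw [lintegral_congr hpt, lintegral_indicator measurableSet_Ioo _,
          ← ofReal_integral_eq_lintegral_ofReal
            ((hint _ (Real.rpow_nonneg hx.le _)).div_const Z)
            (ae_of_all _ fun u => by positivity),
          integral_div]
        have hsub : A ∩ {ω | X ω ≤ x} = {ω | X ω ≤ x} :=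
          Set.inter_eq_self_of_subset_right
            (fun ω (h : X ω ≤ x) => lt_of_le_of_lt h hxs)
        rw [hsub, hXle x hx, hAeq, ENNReal.ofReal_div_of_pos hZpos,
          ENNReal.div_eq_inv_mul]
      · -- s ≤ x : both sides one
        have hc0 : x ^ (-β) - s ^ (-β) ≤ 0 :=
          sub_nonpos.mpr ((Real.rpow_le_rpow_iff_of_neg hx hs hβneg).mpr hsx)
        have hpt : ∀ u : ℝ, (f * G) u = f u := by
          intro u
          show f u * G u = f u
          by_cases hu : u ∈ Set.Ioo (0:ℝ) 1
          · have hσu := hσ_pos u hu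
            have hG : G u = 1 := by
              rw [hGdef]
              refine (expMeasure_congr (fun e he => iff1 hβ hx hs hσu he)).trans
                (expTail_nonpos ?_)
              have := mul_le_mul_of_nonneg_left hc0 hσu.le
              simpa using this
            rw [hG, mul_one]
          · simp only [hfdef]
            rw [Set.indicator_of_notMem hu]
            simp
        have hsub : A ∩ {ω | X ω ≤ x} = A :=
          Set.inter_eq_self_of_subset_left
            (fun ω (h : X ω < s) => le_trans h.le hsx)
        rw [lintegral_congr hpt, hsub,
          ENNReal.inv_mul_cancel hXsne (measure_ne_top μ A)]
        calc ∫⁻ u, f u ∂volume = (volume.withDensity f) Set.univ := by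
              rw [withDensity_apply _ MeasurableSet.univ, Measure.restrict_univ]
          _ = (μ.map U') Set.univ := by rw [hU'_law]
          _ = 1 := by
              haveI : IsProbabilityMeasure (μ.map U') :=
                Measure.isProbabilityMeasure_map hU'_meas.aemeasurable
              exact measure_univ
  · -- Part 2
    intro U E hU hE hU_law hE_law hUE
    have hφm : Measurable fun y : ℝ × ℝ => (σ y.1 / y.2) ^ (1 / β) := by
      exact ((hσ_meas.comp measurable_fst).div measurable_snd).pow_const _
    haveI : IsProbabilityMeasure (μ.map X) := Measure.isProbabilityMeasure_map hX_meas.aemeasurable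
    haveI : IsProbabilityMeasure (μ.map fun ω => (σ (U ω) / E ω) ^ (1 / β)) :=
      Measure.isProbabilityMeasure_map (hφm.comp (hU.prodMk hE)).aemeasurable
    refine Measure.ext_of_Iic _ _ fun x => ?_
    have hL : (μ.map fun ω => (σ (U ω) / E ω) ^ (1 / β)) (Set.Iic x)
        = ∫⁻ u, expMeasure 1 {e | (σ u / e) ^ (1 / β) ≤ x} ∂(μ.map U) :=
      map_pair_apply (φ := fun u e => (σ u / e) ^ (1 / β)) hU hE hE_law hUE hφm x
    rw [hL, hU_law, Measure.map_apply hX_meas measurableSet_Iic]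
    have hpre : X ⁻¹' Set.Iic x = {ω | X ω ≤ x} := rfl
    rw [hpre]
    rcases le_or_gt x 0 with hx | hx
    · rw [hXle0 x hx]
      have hzero : ∀ᵐ u ∂(volume.restrict (Set.Ioo (0:ℝ) 1)),
          expMeasure 1 {e | (σ u / e) ^ (1 / β) ≤ x} = 0 := by
        filter_upwards [ae_restrict_mem measurableSet_Ioo] with u hu
        refine (expMeasure_congr (T := (∅ : Set ℝ)) fun e he => ?_).trans measure_empty
        simp only [Set.mem_empty_iff_false, iff_false, Set.mem_setOf_eq]
        intro hle
        have := Real.rpow_pos_of_pos (div_pos (hσ_pos u hu) he) (1 / β)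
        linarith
      rw [lintegral_congr_ae hzero, lintegral_zero]
    · rw [hXle x hx]
      have hstep : ∀ᵐ u ∂(volume.restrict (Set.Ioo (0:ℝ) 1)),
          expMeasure 1 {e | (σ u / e) ^ (1 / β) ≤ x}
            = ENNReal.ofReal (Real.exp (-σ u * x ^ (-β))) := by
        filter_upwards [ae_restrict_mem measurableSet_Ioo] with u hu
        refine ((expMeasure_congr (T := {e | σ u * x ^ (-β) ≤ e})
          (fun e he => iff2 hβ hx (hσ_pos u hu) he)).trans
          (expTail (mul_nonneg (hσ_pos u hu).le (Real.rpow_nonneg hx.le _)))).trans ?_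
        rw [neg_mul]
      rw [lintegral_congr_ae hstep,
        ← ofReal_integral_eq_lintegral_ofReal (hint _ (Real.rpow_nonneg hx.le _))
          (ae_of_all _ fun u => (Real.exp_pos _).le)]
end
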